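/- Cumulative lower bound for Exp4 weights: For any parameter θ ∈ [0,∞), any expert advice, rewards in [0,1] and actions, the Exp4 weights satisfy q_{t+1}^θ(j) ≥ q_t^θ(j) − θ/√n for every t ≥ 1 and every j ∈ E, and consequently q_t^θ(j) ≥ 1/|E| − (θ/√n)(t − 1) for every j ∈ E and t ≥ 1. -/
import Mathlib


/-- Softmax distribution associated with a score vector. -/
noncomputable def softmax {ι : Type*} [Fintype ι] (h : ι → ℝ) (a : ι) : ℝ :=
  Real.exp (h a) / ∑ b, Real.exp (h b)

/-- Cumulative estimated expert rewards `Y t j = Σ_{s=1}^t ŷ_{j,s}` of the `Exp4`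
algorithm with learning rate `θ/√n`, where
`ŷ_{j,s} = ξ_{j,s}(A_s) g_{A_s,s} / π_s(A_s)` and
`π_s(a) = Σ_i q_s(i) ξ_{i,s}(a)`. -/
noncomputable def exp4Y (n K : ℕ) {E : Type*} [Fintype E]
    (ξ : E → ℕ → Fin K → ℝ) (g : Fin K → ℕ → ℝ) (A : ℕ → Fin K) (θ : ℝ) :
    ℕ → E → ℝ
  | 0 => fun _ => 0
  | (t + 1) => fun j =>
      exp4Y n K ξ g A θ t j +
        ξ j (t + 1) (A (t + 1)) * g (A (t + 1)) (t + 1) /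
          (∑ i, softmax (fun i' => -(θ / Real.sqrt n) * exp4Y n K ξ g A θ t i') i *
            ξ i (t + 1) (A (t + 1)))

/-- The `Exp4` expert weights: `q_1` is uniform over experts and
`q_{t+1} = softmax(−(θ/√n) Σ_{s≤t} ŷ_{·,s})`. -/
noncomputable def exp4q (n K : ℕ) {E : Type*} [Fintype E]
    (ξ : E → ℕ → Fin K → ℝ) (g : Fin K → ℕ → ℝ) (A : ℕ → Fin K) (θ : ℝ)
    (t : ℕ) : E → ℝ :=
  softmax (fun i => -(θ / Real.sqrt n) * exp4Y n K ξ g A θ (t - 1) i)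

/-- The `Exp4` mixture action probabilities `π_t(a) = Σ_j q_t(j) ξ_{j,t}(a)`. -/
noncomputable def exp4Pi (n K : ℕ) {E : Type*} [Fintype E]
    (ξ : E → ℕ → Fin K → ℝ) (g : Fin K → ℕ → ℝ) (A : ℕ → Fin K) (θ : ℝ)
    (t : ℕ) (a : Fin K) : ℝ :=
  ∑ j, exp4q n K ξ g A θ t j * ξ j t a

lemma softmax_pos {ι : Type*} [Fintype ι] [Nonempty ι] (h : ι → ℝ) (a : ι) :
    0 < softmax h a :=
  div_pos (Real.exp_pos _) (Finset.sum_pos (fun b _ => Real.exp_pos _) Finset.univ_nonempty)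

lemma softmax_const {ι : Type*} [Fintype ι] [Nonempty ι] (c : ℝ) (j : ι) :
    softmax (fun _ => c) j = 1 / (Fintype.card ι : ℝ) := by
  have hc : (Fintype.card ι : ℝ) ≠ 0 := Nat.cast_ne_zero.2 Fintype.card_ne_zero
  simp only [softmax, Finset.sum_const, Finset.card_univ, nsmul_eq_mul]
  rw [div_eq_div_iff (by positivity) hc]
  ring

lemma softmax_step {ι : Type*} [Fintype ι] [Nonempty ι] (h y : ι → ℝ)
    (hy : ∀ i, 0 ≤ y i) (j : ι) :
    softmax h j * (1 - y j) ≤ softmax (fun i => h i - y i) j := by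
  have hS : 0 < ∑ b, Real.exp (h b) :=
    Finset.sum_pos (fun b _ => Real.exp_pos _) Finset.univ_nonempty
  have hD : 0 < ∑ b, Real.exp (h b - y b) :=
    Finset.sum_pos (fun b _ => Real.exp_pos _) Finset.univ_nonempty
  have hDS : ∑ b, Real.exp (h b - y b) ≤ ∑ b, Real.exp (h b) :=
    Finset.sum_le_sum fun b _ => Real.exp_le_exp.2 (by linarith [hy b])
  calc softmax h j * (1 - y j)
      ≤ softmax h j * Real.exp (-(y j)) := by
        refine mul_le_mul_of_nonneg_left ?_ (le_of_lt (softmax_pos h j))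
        linarith [Real.add_one_le_exp (-(y j))]
    _ = Real.exp (h j - y j) / ∑ b, Real.exp (h b) := by
        rw [softmax, div_mul_eq_mul_div, ← Real.exp_add]
        ring_nf
    _ ≤ Real.exp (h j - y j) / ∑ b, Real.exp (h b - y b) := by gcongr
    _ = softmax (fun i => h i - y i) j := rfl

/-- cumulative lower bound for `Exp4` weights. For any `θ ≥ 0`,
any expert advice (probability vectors), rewards in `[0,1]` and actions, the
`Exp4` weights satisfy `q_{t+1}(j) ≥ q_t(j) − θ/√n` for every `t ≥ 1` and `j`,
and consequently `q_t(j) ≥ 1/|E| − (θ/√n)(t − 1)` for every `j` and `t ≥ 1`. -/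
theorem exp4_weights_cumulative_lower_bound (n K : ℕ) (hn : 1 ≤ n) (hK : 2 ≤ K)
    {E : Type*} [Fintype E] [Nonempty E]
    (ξ : E → ℕ → Fin K → ℝ)
    (hξ0 : ∀ j t a, 0 ≤ ξ j t a) (hξ1 : ∀ j t, ∑ a, ξ j t a = 1)
    (g : Fin K → ℕ → ℝ) (hg : ∀ a t, g a t ∈ Set.Icc (0 : ℝ) 1)
    (A : ℕ → Fin K) (θ : ℝ) (hθ : 0 ≤ θ) :
    (∀ t : ℕ, 1 ≤ t → ∀ j : E,
      exp4q n K ξ g A θ t j - θ / Real.sqrt n ≤ exp4q n K ξ g A θ (t + 1) j) ∧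
    (∀ t : ℕ, 1 ≤ t → ∀ j : E,
      1 / (Fintype.card E : ℝ) - θ / Real.sqrt n * ((t : ℝ) - 1) ≤
        exp4q n K ξ g A θ t j) := by
  have hη : 0 ≤ θ / Real.sqrt n := div_nonneg hθ (Real.sqrt_nonneg n)
  have key : ∀ s : ℕ, ∀ j : E,
      exp4q n K ξ g A θ (s + 1) j - θ / Real.sqrt n ≤ exp4q n K ξ g A θ (s + 2) j := by
    intro s j
    set η := θ / Real.sqrt n with hηdef
    set Ys := exp4Y n K ξ g A θ s with hYs
    set a := A (s + 1) with ha
    set p : E → ℝ := softmax (fun i => -η * Ys i) with hp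
    set yhat : E → ℝ := fun i =>
      ξ i (s + 1) a * g a (s + 1) / (∑ i', p i' * ξ i' (s + 1) a) with hyhat
    have hq1 : exp4q n K ξ g A θ (s + 1) = p := rfl
    have hYsucc : exp4Y n K ξ g A θ (s + 1) = fun i => Ys i + yhat i := by
      funext i
      simp only [exp4Y, hyhat, hYs, hp, hηdef, ha]
    have hq2 : exp4q n K ξ g A θ (s + 2) =
        softmax (fun i => (-η * Ys i) - η * yhat i) := by
      have h3 : (fun i => -(θ / Real.sqrt n) * exp4Y n K ξ g A θ (s + 2 - 1) i) =
          fun i => (-η * Ys i) - η * yhat i := by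
        funext i
        have h4 : (s + 2 - 1 : ℕ) = s + 1 := rfl
        rw [h4]
        simp only [hYsucc, hηdef]
        ring
      show softmax _ = _
      rw [h3]
    have hy0 : ∀ i, 0 ≤ yhat i := by
      intro i
      refine div_nonneg (mul_nonneg (hξ0 _ _ _) (hg a (s + 1)).1) ?_
      exact Finset.sum_nonneg fun i' _ =>
        mul_nonneg (le_of_lt (softmax_pos _ i')) (hξ0 _ _ _)
    have hbound : p j * yhat j ≤ 1 := by
      have hπ0 : 0 ≤ ∑ i', p i' * ξ i' (s + 1) a :=
        Finset.sum_nonneg fun i' _ =>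
          mul_nonneg (le_of_lt (softmax_pos _ i')) (hξ0 _ _ _)
      have hnum : p j * (ξ j (s + 1) a * g a (s + 1)) ≤ ∑ i', p i' * ξ i' (s + 1) a := by
        calc p j * (ξ j (s + 1) a * g a (s + 1))
            = p j * ξ j (s + 1) a * g a (s + 1) := by ring
          _ ≤ p j * ξ j (s + 1) a * 1 :=
              mul_le_mul_of_nonneg_left (hg a (s + 1)).2
                (mul_nonneg (le_of_lt (softmax_pos (fun i => -η * Ys i) j)) (hξ0 j (s + 1) a))
          _ = p j * ξ j (s + 1) a := by ring
          _ ≤ ∑ i', p i' * ξ i' (s + 1) a :=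
              Finset.single_le_sum (f := fun i' => p i' * ξ i' (s + 1) a)
                (fun i' _ => mul_nonneg (le_of_lt (softmax_pos _ i')) (hξ0 _ _ _))
                (Finset.mem_univ j)
      calc p j * yhat j = p j * (ξ j (s + 1) a * g a (s + 1)) /
            (∑ i', p i' * ξ i' (s + 1) a) := by rw [hyhat]; ring
        _ ≤ 1 := div_le_one_of_le₀ hnum hπ0
    have hstep := softmax_step (fun i => -η * Ys i) (fun i => η * yhat i)
      (fun i => mul_nonneg hη (hy0 i)) j
    rw [hq1, hq2]
    have : p j * (1 - η * yhat j) ≥ p j - η := by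
      have h1 : η * (p j * yhat j) ≤ η * 1 := mul_le_mul_of_nonneg_left hbound hη
      nlinarith
    calc p j - η ≤ p j * (1 - η * yhat j) := this
      _ ≤ softmax (fun i => (-η * Ys i) - η * yhat i) j := hstep
  refine ⟨fun t ht j => ?_, fun t ht j => ?_⟩
  · obtain ⟨s, rfl⟩ := Nat.exists_eq_succ_of_ne_zero (Nat.one_le_iff_ne_zero.1 ht)
    exact key s j
  · induction t, ht using Nat.le_induction with
    | base =>
        have h1 : exp4q n K ξ g A θ 1 j = 1 / (Fintype.card E : ℝ) := by
          have : exp4q n K ξ g A θ 1 j = softmax (fun _ : E => (0 : ℝ)) j := by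
            show softmax _ _ = _
            congr 1
            funext i
            show -(θ / Real.sqrt n) * exp4Y n K ξ g A θ 0 i = 0
            simp [exp4Y]
          rw [this, softmax_const]
        rw [h1]
        simp
    | succ t ht IH =>
        obtain ⟨s, rfl⟩ := Nat.exists_eq_succ_of_ne_zero (Nat.one_le_iff_ne_zero.1 ht)
        have h1 := key s j
        push_cast
        push_cast at IH
        linarith
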